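/- For Boolean single-atom CRPQs Q₁() = x →^{L₁} y and Q₂() = x →^{L₂} y, the three containment relations coincide: Q₁ ⊆_{st} Q₂ iff Q₁ ⊆_{a-inj} Q₂ iff Q₁ ⊆_{q-inj} Q₂. -/

import Mathlib

/-- A graph database over a finite alphabet `A`: a finite set of nodes with
`A`-labeled directed edges. -/
structure GraphDB (A : Type) where
  V : Type
  fin : Finite V
  E : V → A → V → Prop

namespace GraphDB

variable {A : Type} (G : GraphDB A)

/-- `Chain u s` holds when `s` is a list of (label, next-vertex) steps forming a
directed path starting at `u`. -/
def Chain : G.V → List (A × G.V) → Prop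
  | _, [] => True
  | u, (a, v) :: rest => G.E u a v ∧ Chain v rest

/-- Endpoint of the path starting at `u` with steps `s`. -/
def endOf (u : G.V) (s : List (A × G.V)) : G.V := (s.map Prod.snd).getLastD u

/-- Label (word) of a path. -/
def label (s : List (A × G.V)) : List A := s.map Prod.fst

/-- The list of nodes visited by the path starting at `u` with steps `s`. -/
def nodes (u : G.V) (s : List (A × G.V)) : List G.V := u :: s.map Prod.snd

/-- Internal nodes of a path: all visited nodes except the first and the last. -/
def internal (u : G.V) (s : List (A × G.V)) : List G.V := (s.map Prod.snd).dropLast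

/-- A simple path: no repeated nodes. -/
def IsSimplePath (u : G.V) (s : List (A × G.V)) : Prop := (G.nodes u s).Nodup

/-- A simple cycle: returns to its start and repeats no other node. -/
def IsSimpleCycle (u : G.V) (s : List (A × G.V)) : Prop :=
  G.endOf u s = u ∧ (u :: (s.map Prod.snd).dropLast).Nodup

end GraphDB

/-- A conjunctive regular path query with `n` (not necessarily distinct) free
variables: finitely many variables and `m` atoms `src i →^{lang i} tgt i`,
where each `lang i` is a language over `A`. -/
structure CRPQ (A : Type) (n : ℕ) where
  X : Type
  fin : Finite X
  m : ℕ
  src : Fin m → X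
  lang : Fin m → Set (List A)
  tgt : Fin m → X
  free : Fin n → X

namespace CRPQ

variable {A : Type} {n : ℕ} (Q : CRPQ A n) (G : GraphDB A)

/-- `s` is a witnessing path for atom `i` under the assignment `μ`. -/
def Wit (μ : Q.X → G.V) (i : Fin Q.m) (s : List (A × G.V)) : Prop :=
  G.Chain (μ (Q.src i)) s ∧ G.endOf (μ (Q.src i)) s = μ (Q.tgt i) ∧
    G.label s ∈ Q.lang i

/-- A witnessing path which is moreover a simple path (a simple cycle if the
atom's endpoints are the same variable). -/
def WitSimple (μ : Q.X → G.V) (i : Fin Q.m) (s : List (A × G.V)) : Prop :=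
  Q.Wit G μ i s ∧
    (Q.src i = Q.tgt i → G.IsSimpleCycle (μ (Q.src i)) s) ∧
    (Q.src i ≠ Q.tgt i → G.IsSimplePath (μ (Q.src i)) s)

/-- Standard semantics. -/
def evalSt : Set (Fin n → G.V) :=
  { v | ∃ μ : Q.X → G.V, (∀ j, μ (Q.free j) = v j) ∧ ∀ i, ∃ s, Q.Wit G μ i s }

/-- Atom-injective semantics: each atom is witnessed by a simple path
(simple cycle for atoms with equal endpoints). -/
def evalAInj : Set (Fin n → G.V) :=
  { v | ∃ μ : Q.X → G.V, (∀ j, μ (Q.free j) = v j) ∧ ∀ i, ∃ s, Q.WitSimple G μ i s }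

/-- Query-injective semantics: additionally the variable assignment is
injective, witnessing simple paths of distinct atoms share no internal nodes,
and internal nodes of witnessing paths avoid the images of the variables. -/
def evalQInj : Set (Fin n → G.V) :=
  { v | ∃ μ : Q.X → G.V, Function.Injective μ ∧ (∀ j, μ (Q.free j) = v j) ∧
      ∃ π : (i : Fin Q.m) → List (A × G.V),
        (∀ i, Q.WitSimple G μ i (π i)) ∧
        (∀ i j, i ≠ j → ∀ x, x ∈ G.internal (μ (Q.src i)) (π i) →
          x ∉ G.internal (μ (Q.src j)) (π j)) ∧
        (∀ i, ∀ x ∈ G.internal (μ (Q.src i)) (π i), ∀ z, x ≠ μ z) }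

end CRPQ

/-- Containment under standard semantics. -/
def ContainedSt {A : Type} {n : ℕ} (Q₁ Q₂ : CRPQ A n) : Prop :=
  ∀ G : GraphDB A, Q₁.evalSt G ⊆ Q₂.evalSt G

/-- Containment under atom-injective semantics. -/
def ContainedAInj {A : Type} {n : ℕ} (Q₁ Q₂ : CRPQ A n) : Prop :=
  ∀ G : GraphDB A, Q₁.evalAInj G ⊆ Q₂.evalAInj G

/-- Containment under query-injective semantics. -/
def ContainedQInj {A : Type} {n : ℕ} (Q₁ Q₂ : CRPQ A n) : Prop :=
  ∀ G : GraphDB A, Q₁.evalQInj G ⊆ Q₂.evalQInj G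

/-- The Boolean single-atom CRPQ `Q() = x →^L y` with `x ≠ y`. -/
def singleAtom {A : Type} (L : Set (List A)) : CRPQ A 0 where
  X := Fin 2
  fin := inferInstance
  m := 1
  src := fun _ => 0
  lang := fun _ => L
  tgt := fun _ => 1
  free := fun j => j.elim0

/-! ### Auxiliary lemmas -/

section ListHelpers

variable {β : Type*}

lemma aux_cons_eq_dropLast_append (d : β) (l : List β) :
    d :: l = (d :: l).dropLast ++ [l.getLastD d] := by
  induction l generalizing d with
  | nil => rfl
  | cons a l ih =>
    rw [List.getLastD_cons]
    show d :: a :: l = d :: (a :: l).dropLast ++ [l.getLastD a]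
    rw [List.cons_append]
    exact congrArg (d :: ·) (ih a)

lemma aux_eq_dropLast_append {l : List β} (h : l ≠ []) (d : β) :
    l = l.dropLast ++ [l.getLastD d] := by
  cases l with
  | nil => exact absurd rfl h
  | cons a t =>
    rw [List.getLastD_cons]
    exact aux_cons_eq_dropLast_append a t

lemma aux_getLastD_mem {l : List β} (h : l ≠ []) (d : β) : l.getLastD d ∈ l := by
  conv_lhs => rw [aux_eq_dropLast_append h d]
  simp

lemma aux_ne_getLastD {l : List β} (hnd : l.Nodup) (d : β) {x : β}
    (hx : x ∈ l.dropLast) : x ≠ l.getLastD d := by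
  have hne : l ≠ [] := by
    rintro rfl; simp at hx
  have := hnd
  rw [aux_eq_dropLast_append hne d] at this
  have hdisj := (List.nodup_append'.mp this).2.2
  intro hxe
  exact hdisj hx (by simp [hxe])

end ListHelpers

namespace GraphDB

variable {A : Type} (G : GraphDB A)

lemma chain_cons (u : G.V) (a : A) (v : G.V) (s : List (A × G.V)) :
    G.Chain u ((a, v) :: s) ↔ G.E u a v ∧ G.Chain v s := Iff.rfl

lemma endOf_nil (u : G.V) : G.endOf u [] = u := rfl

lemma endOf_cons (u : G.V) (a : A) (v : G.V) (s : List (A × G.V)) :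
    G.endOf u ((a, v) :: s) = G.endOf v s := by
  rw [endOf, endOf, List.map_cons, List.getLastD_cons]

lemma chain_append (s₁ s₂ : List (A × G.V)) (u : G.V) :
    G.Chain u (s₁ ++ s₂) ↔ G.Chain u s₁ ∧ G.Chain (G.endOf u s₁) s₂ := by
  induction s₁ generalizing u with
  | nil => simp [Chain, endOf_nil]
  | cons p s ih =>
    obtain ⟨a, v⟩ := p
    simp [chain_cons, ih, endOf_cons, and_assoc]

lemma endOf_append (s₁ s₂ : List (A × G.V)) (u : G.V) :
    G.endOf u (s₁ ++ s₂) = G.endOf (G.endOf u s₁) s₂ := by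
  induction s₁ generalizing u with
  | nil => simp [endOf_nil]
  | cons p s ih =>
    obtain ⟨a, v⟩ := p
    simp [endOf_cons, ih]

lemma endOf_mem_nodes (u : G.V) (s : List (A × G.V)) :
    G.endOf u s ∈ G.nodes u s := by
  cases hs : s.map Prod.snd with
  | nil => simp [endOf, hs, nodes]
  | cons b t =>
    have : G.endOf u s ∈ s.map Prod.snd := by
      rw [endOf, hs]
      exact aux_getLastD_mem (by simp) u
    simp [nodes, this]

/-- On a simple nonempty path: start differs from end, and internal nodes differ
from both endpoints. -/
lemma simple_endpoints {u : G.V} {s : List (A × G.V)}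
    (hnd : (G.nodes u s).Nodup) (hs : s ≠ []) :
    u ≠ G.endOf u s ∧ ∀ x ∈ G.internal u s, x ≠ u ∧ x ≠ G.endOf u s := by
  have hmapne : s.map Prod.snd ≠ [] := by simpa using hs
  have hu_not : u ∉ s.map Prod.snd := by
    have := hnd
    rw [nodes, List.nodup_cons] at this
    exact this.1
  have hend_mem : G.endOf u s ∈ s.map Prod.snd := aux_getLastD_mem hmapne u
  have htail_nd : (s.map Prod.snd).Nodup := by
    have := hnd
    rw [nodes, List.nodup_cons] at this
    exact this.2
  refine ⟨fun h => hu_not (h ▸ hend_mem), fun x hx => ?_⟩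
  have hx_mem : x ∈ s.map Prod.snd := (List.dropLast_sublist _).mem hx
  exact ⟨fun h => hu_not (h ▸ hx_mem), aux_ne_getLastD htail_nd u hx⟩

/-- The middle part of a chain is a chain whose node list is an infix. -/
lemma nodes_middle_infix (s₁ s₂ s₃ : List (A × G.V)) (u : G.V) :
    G.nodes (G.endOf u s₁) s₂ <:+: G.nodes u (s₁ ++ s₂ ++ s₃) := by
  refine ⟨(u :: s₁.map Prod.snd).dropLast, s₃.map Prod.snd, ?_⟩
  have h1 : u :: s₁.map Prod.snd
      = (u :: s₁.map Prod.snd).dropLast ++ [G.endOf u s₁] :=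
    aux_cons_eq_dropLast_append u _
  calc (u :: s₁.map Prod.snd).dropLast ++ G.nodes (G.endOf u s₁) s₂ ++ s₃.map Prod.snd
      = ((u :: s₁.map Prod.snd).dropLast ++ [G.endOf u s₁]) ++ (s₂.map Prod.snd ++ s₃.map Prod.snd) := by
        simp [nodes]
    _ = (u :: s₁.map Prod.snd) ++ (s₂.map Prod.snd ++ s₃.map Prod.snd) := by rw [← h1]
    _ = G.nodes u (s₁ ++ s₂ ++ s₃) := by simp [nodes]

end GraphDB

/-! ### The canonical path database of a word -/

/-- The canonical graph database of a word `w`: a simple path `0 → 1 → ⋯ → |w|`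
labeled by `w`. -/
def pathDB {A : Type} (w : List A) : GraphDB A where
  V := Fin (w.length + 1)
  fin := inferInstance
  E u a v := ∃ h : u.val < w.length, a = w.get ⟨u.val, h⟩ ∧ v.val = u.val + 1

namespace GraphDB

variable {A : Type}

/-- Any chain in `pathDB w` reads a factor of `w`. -/
lemma chain_pathDB (w : List A) :
    ∀ (s : List (A × (pathDB w).V)) (u : (pathDB w).V),
      (pathDB w).Chain u s →
      u.val + s.length ≤ w.length ∧
      (pathDB w).label s = (w.drop u.val).take s.length ∧
      ((pathDB w).endOf u s).val = u.val + s.length := by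
  intro s
  induction s with
  | nil =>
    intro u _
    refine ⟨by have := u.isLt; simp only [List.length_nil]; omega,
      by simp [label], by simp [endOf]⟩
  | cons p s ih =>
    obtain ⟨a, v⟩ := p
    intro u hc
    obtain ⟨⟨hlt, ha, hv⟩, hc'⟩ := hc
    obtain ⟨h1, h2, h3⟩ := ih v hc'
    refine ⟨by simp only [List.length_cons]; omega, ?_, ?_⟩
    · have hdrop : w.drop u.val = w[u.val] :: w.drop (u.val + 1) :=
        List.drop_eq_getElem_cons hlt
      rw [label, List.map_cons, hdrop, List.length_cons, List.take_succ_cons]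
      rw [label] at h2
      rw [h2, hv]
      simp [ha]
    · rw [(pathDB w).endOf_cons u a v s, h3, hv]
      simp [List.length_cons]
      omega

/-- Steps of the canonical full path in `pathDB w` (starting at index `i`,
reading the suffix `r`). -/
def pathSteps (w : List A) : ℕ → List A → List (A × (pathDB w).V)
  | _, [] => []
  | i, a :: r => (a, ⟨min (i + 1) w.length, by omega⟩) :: pathSteps w (i + 1) r

lemma pathSteps_spec (w : List A) :
    ∀ (r : List A) (i : ℕ) (hi : i ≤ w.length) (hd : w.drop i = r),
      (pathDB w).Chain ⟨i, by omega⟩ (pathSteps w i r) ∧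
      (pathSteps w i r).map (fun p => (p.2 : Fin (w.length + 1)).val)
        = List.range' (i + 1) r.length ∧
      (pathDB w).label (pathSteps w i r) = r := by
  intro r
  induction r with
  | nil => intro i hi hd; exact ⟨trivial, by simp [pathSteps], by simp [pathSteps, label]⟩
  | cons a r ih =>
    intro i hi hd
    have hlen : (w.drop i).length = r.length + 1 := by rw [hd]; rfl
    have hlt : i < w.length := by
      rw [List.length_drop] at hlen; omega
    have hdrop : w.drop i = w[i] :: w.drop (i + 1) := List.drop_eq_getElem_cons hlt
    rw [hd] at hdrop
    have ha : a = w[i] := by injection hdrop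
    have hr : w.drop (i + 1) = r := by
      injection hdrop with h1 h2; exact h2.symm
    obtain ⟨ihc, ihm, ihl⟩ := ih (i + 1) (by omega) hr
    have hfin : (⟨min (i + 1) w.length, by omega⟩ : Fin (w.length + 1))
        = ⟨i + 1, by omega⟩ := Fin.ext (by simp; omega)
    have hps : pathSteps w i (a :: r)
        = (a, ⟨min (i + 1) w.length, by omega⟩) :: pathSteps w (i + 1) r := rfl
    rw [hps]
    refine ⟨⟨⟨hlt, by simpa using ha, by simp; omega⟩, ?_⟩, ?_, ?_⟩
    · rw [hfin]
      exact ihc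
    · rw [List.map_cons, ihm]
      simp only [List.length_cons, List.range'_succ]
      congr 1
      simp; omega
    · rw [label, List.map_cons, ← label, ihl]

/-- Data of the canonical full path in `pathDB w`. -/
lemma pathDB_fullPath (w : List A) :
    ∃ s : List (A × (pathDB w).V),
      (pathDB w).Chain ⟨0, by omega⟩ s ∧
      (pathDB w).label s = w ∧
      s.length = w.length ∧
      ((pathDB w).endOf ⟨0, by omega⟩ s).val = w.length ∧
      ((pathDB w).nodes ⟨0, by omega⟩ s).Nodup := by
  obtain ⟨hc, hm, hl⟩ := pathSteps_spec w w 0 (by omega) (by simp)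
  refine ⟨pathSteps w 0 w, hc, hl, ?_, ?_, ?_⟩
  · have := congrArg List.length hm
    simpa [label] using this
  · have hlen : (pathSteps w 0 w).length = w.length := by
      have := congrArg List.length hm
      simpa [label] using this
    have := (chain_pathDB w _ _ hc).2.2
    rw [this, hlen]
    simp
  · apply List.Nodup.of_map (fun x : Fin (w.length + 1) => x.val)
    have : ((pathDB w).nodes ⟨0, by omega⟩ (pathSteps w 0 w)).map
        (fun x : Fin (w.length + 1) => x.val)
        = 0 :: List.range' 1 w.length := by
      simp only [nodes, List.map_cons, List.map_map]
      exact congrArg (List.cons 0) (List.map_map.trans hm)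
    rw [this, List.nodup_cons]
    refine ⟨?_, List.nodup_range' (s := 1) (n := w.length)⟩
    intro h
    have := List.mem_range'_1.mp h
    omega

end GraphDB

namespace CRPQ

variable {A : Type} {n : ℕ} (Q : CRPQ A n) (G : GraphDB A)

lemma evalQInj_subset_evalAInj : Q.evalQInj G ⊆ Q.evalAInj G := by
  rintro v ⟨μ, -, hf, π, hw, -, -⟩
  exact ⟨μ, hf, fun i => ⟨π i, hw i⟩⟩

lemma evalAInj_subset_evalSt : Q.evalAInj G ⊆ Q.evalSt G := by
  rintro v ⟨μ, hf, hw⟩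
  exact ⟨μ, hf, fun i => (hw i).elim fun s h => ⟨s, h.1⟩⟩

end CRPQ

/-! ### Characterizations of the three semantics for single-atom queries -/

section SingleAtom

variable {A : Type} {L : Set (List A)} {G : GraphDB A}

lemma singleAtom_fin_m_eq {L : Set (List A)} (i j : Fin (singleAtom L).m) : i = j := by
  have hi : (i : ℕ) < 1 := i.isLt
  have hj : (j : ℕ) < 1 := j.isLt
  exact Fin.ext (by omega)

lemma singleAtom_src_ne_tgt (i : Fin (singleAtom L).m) :
    (singleAtom L).src i ≠ (singleAtom L).tgt i := by
  intro h
  simp [singleAtom] at h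

lemma mem_evalSt_singleAtom {v : Fin 0 → G.V} :
    v ∈ (singleAtom L).evalSt G ↔
      ∃ (u e : G.V) (s : List (A × G.V)),
        G.Chain u s ∧ G.endOf u s = e ∧ G.label s ∈ L := by
  constructor
  · rintro ⟨μ, -, hw⟩
    obtain ⟨s, h1, h2, h3⟩ := hw ⟨0, Nat.one_pos⟩
    exact ⟨_, _, s, h1, h2, h3⟩
  · rintro ⟨u, e, s, h1, h2, h3⟩
    refine ⟨fun x : Fin 2 => if x = 0 then u else e, fun j => j.elim0, fun i => ⟨s, ?_, ?_, ?_⟩⟩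
    · simp only [singleAtom]
      simpa using h1
    · simp only [singleAtom]
      simpa using h2
    · simpa [singleAtom] using h3

lemma mem_evalAInj_singleAtom {v : Fin 0 → G.V} :
    v ∈ (singleAtom L).evalAInj G ↔
      ∃ (u e : G.V) (s : List (A × G.V)),
        G.Chain u s ∧ G.endOf u s = e ∧ G.label s ∈ L ∧ (G.nodes u s).Nodup := by
  constructor
  · rintro ⟨μ, -, hw⟩
    obtain ⟨s, ⟨h1, h2, h3⟩, -, h4⟩ := hw ⟨0, Nat.one_pos⟩
    exact ⟨_, _, s, h1, h2, h3, h4 (singleAtom_src_ne_tgt _)⟩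
  · rintro ⟨u, e, s, h1, h2, h3, h4⟩
    refine ⟨fun x : Fin 2 => if x = 0 then u else e, fun j => j.elim0,
      fun i => ⟨s, ⟨?_, ?_, ?_⟩, fun h => absurd h (singleAtom_src_ne_tgt i), fun _ => ?_⟩⟩
    · simp only [singleAtom]
      simpa using h1
    · simp only [singleAtom]
      simpa using h2
    · simpa [singleAtom] using h3
    · show (G.nodes _ s).Nodup
      simp only [singleAtom]
      simpa using h4

lemma mem_evalQInj_singleAtom {v : Fin 0 → G.V} :
    v ∈ (singleAtom L).evalQInj G ↔
      ∃ (u e : G.V) (s : List (A × G.V)),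
        G.Chain u s ∧ G.endOf u s = e ∧ G.label s ∈ L ∧ (G.nodes u s).Nodup ∧
        u ≠ e ∧ ∀ x ∈ G.internal u s, x ≠ u ∧ x ≠ e := by
  constructor
  · rintro ⟨μ, hinj, -, π, hw, -, hint⟩
    set i₀ : Fin (singleAtom L).m := ⟨0, Nat.one_pos⟩
    obtain ⟨⟨h1, h2, h3⟩, -, h4⟩ := hw i₀
    refine ⟨_, _, π i₀, h1, h2, h3, h4 (singleAtom_src_ne_tgt _), ?_, ?_⟩
    · intro h
      exact singleAtom_src_ne_tgt i₀ (hinj h)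
    · intro x hx
      exact ⟨hint i₀ x hx _, hint i₀ x hx _⟩
  · rintro ⟨u, e, s, h1, h2, h3, h4, h5, h6⟩
    have hinj : Function.Injective (fun x : Fin 2 => if x = 0 then u else e) := by
      intro a b hab
      fin_cases a <;> fin_cases b <;> simp_all
    refine ⟨fun x : Fin 2 => if x = 0 then u else e, hinj, fun j => j.elim0, fun _ => s,
      fun i => ⟨⟨?_, ?_, ?_⟩, fun h => absurd h (singleAtom_src_ne_tgt i), fun _ => ?_⟩,
      fun i j hij => absurd (singleAtom_fin_m_eq i j) hij, fun i x hx z => ?_⟩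
    · simp only [singleAtom]
      simpa using h1
    · simp only [singleAtom]
      simpa using h2
    · simpa [singleAtom] using h3
    · show (G.nodes _ s).Nodup
      simp only [singleAtom]
      simpa using h4
    · have hx' : x ∈ G.internal u s := by
        simp only [singleAtom] at hx
        simpa using hx
      obtain ⟨hxu, hxe⟩ := h6 x hx'
      revert z
      show ∀ z : Fin 2, x ≠ if z = 0 then u else e
      intro z
      fin_cases z <;> simpa

end SingleAtom

/-! ### The factor condition and the six implications -/

section Main

variable {A : Type} {L₁ L₂ : Set (List A)}

/-- Every word of `L₁` has a factor in `L₂`. -/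
def FactorCond (L₁ L₂ : Set (List A)) : Prop :=
  ∀ w ∈ L₁, ∃ a b c : List A, w = a ++ b ++ c ∧ b ∈ L₂

/-- Any witness of `L₂` in the canonical path DB of `w` gives a factor of `w`. -/
lemma factor_of_wit_pathDB {w : List A} {u e : (pathDB w).V}
    {s : List (A × (pathDB w).V)} (hc : (pathDB w).Chain u s)
    (hl : (pathDB w).label s ∈ L₂) :
    ∃ a b c : List A, w = a ++ b ++ c ∧ b ∈ L₂ := by
  obtain ⟨h1, h2, h3⟩ := GraphDB.chain_pathDB w s u hc
  refine ⟨w.take u.val, (pathDB w).label s, w.drop (u.val + s.length), ?_, hl⟩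
  have key : (w.drop u.val).take s.length ++ w.drop (u.val + s.length) = w.drop u.val := by
    rw [← List.drop_drop (i := s.length) (j := u.val) (l := w), List.take_append_drop]
  rw [h2, List.append_assoc, key, List.take_append_drop]

/-- The canonical path DB of a word `w ∈ L₁` q-injectively satisfies
`singleAtom L₁`. -/
lemma mem_evalQInj_pathDB {w : List A} (hw : w ∈ L₁) (hne : w ≠ [])
    (v : Fin 0 → (pathDB w).V) : v ∈ (singleAtom L₁).evalQInj (pathDB w) := by
  rw [mem_evalQInj_singleAtom]
  obtain ⟨s, hc, hl, hslen, hend, hnd⟩ := GraphDB.pathDB_fullPath w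
  have hwpos : 0 < w.length := List.length_pos_iff.mpr hne
  have hsne : s ≠ [] := by
    intro h
    rw [h] at hslen
    simp at hslen
    omega
  obtain ⟨hneq, hint⟩ := GraphDB.simple_endpoints (pathDB w) hnd hsne
  exact ⟨_, _, s, hc, rfl, hl.symm ▸ hw, hnd, hneq, hint⟩

/-- Each of the three containments implies the factor condition. -/
lemma factorCond_of_contained_st (h₁ : ([] : List A) ∉ L₁)
    (h : ContainedSt (singleAtom L₁) (singleAtom L₂)) : FactorCond L₁ L₂ := by
  intro w hwL
  have hne : w ≠ [] := fun h' => h₁ (h' ▸ hwL)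
  have hmem := mem_evalQInj_pathDB hwL hne (fun j => j.elim0)
  have hst : (fun j : Fin 0 => j.elim0) ∈ (singleAtom L₁).evalSt (pathDB w) :=
    CRPQ.evalAInj_subset_evalSt _ _ (CRPQ.evalQInj_subset_evalAInj _ _ hmem)
  obtain ⟨u, e, s, hc, -, hl⟩ := mem_evalSt_singleAtom.mp (h _ hst)
  exact factor_of_wit_pathDB (e := e) hc hl

lemma factorCond_of_contained_ainj (h₁ : ([] : List A) ∉ L₁)
    (h : ContainedAInj (singleAtom L₁) (singleAtom L₂)) : FactorCond L₁ L₂ := by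
  intro w hwL
  have hne : w ≠ [] := fun h' => h₁ (h' ▸ hwL)
  have hmem := mem_evalQInj_pathDB hwL hne (fun j => j.elim0)
  have hst : (fun j : Fin 0 => j.elim0) ∈ (singleAtom L₁).evalAInj (pathDB w) :=
    CRPQ.evalQInj_subset_evalAInj _ _ hmem
  obtain ⟨u, e, s, hc, -, hl, -⟩ := mem_evalAInj_singleAtom.mp (h _ hst)
  exact factor_of_wit_pathDB (e := e) hc hl

lemma factorCond_of_contained_qinj (h₁ : ([] : List A) ∉ L₁)
    (h : ContainedQInj (singleAtom L₁) (singleAtom L₂)) : FactorCond L₁ L₂ := by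
  intro w hwL
  have hne : w ≠ [] := fun h' => h₁ (h' ▸ hwL)
  have hmem := mem_evalQInj_pathDB hwL hne (fun j => j.elim0)
  obtain ⟨u, e, s, hc, -, hl, -⟩ := mem_evalQInj_singleAtom.mp (h _ hmem)
  exact factor_of_wit_pathDB (e := e) hc hl

/-- Core transfer: from a witnessing chain for `L₁` and the factor condition,
extract a witnessing sub-chain for `L₂`, inheriting simplicity. -/
lemma transfer_core (hC : FactorCond L₁ L₂) (h₂ : ([] : List A) ∉ L₂)
    {G : GraphDB A} {u₀ : G.V} {s : List (A × G.V)}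
    (hc : G.Chain u₀ s) (hl : G.label s ∈ L₁) :
    ∃ (u' e' : G.V) (s₂ : List (A × G.V)),
      G.Chain u' s₂ ∧ G.endOf u' s₂ = e' ∧ G.label s₂ ∈ L₂ ∧
      ((G.nodes u₀ s).Nodup →
        (G.nodes u' s₂).Nodup ∧ u' ≠ e' ∧
        ∀ x ∈ G.internal u' s₂, x ≠ u' ∧ x ≠ e') := by
  obtain ⟨a, b, c, hab, hbL⟩ := hC _ hl
  set s₁ := s.take a.length with hs₁
  set s₂ := (s.drop a.length).take b.length with hs₂
  set s₃ := (s.drop a.length).drop b.length with hs₃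
  have hsplit : s = s₁ ++ s₂ ++ s₃ := by
    rw [hs₁, hs₂, hs₃, List.append_assoc, List.take_append_drop, List.take_append_drop]
  have hlab : G.label s₂ = b := by
    have : G.label s₂ = ((G.label s).drop a.length).take b.length := by
      rw [hs₂, GraphDB.label, GraphDB.label, List.map_take, List.map_drop]
    rw [this, hab, List.append_assoc, List.drop_left, List.take_left]
  set u' := G.endOf u₀ s₁ with hu'
  have hchain : G.Chain u' s₂ := by
    have h1 := hsplit ▸ hc
    rw [List.append_assoc, G.chain_append] at h1
    exact ((G.chain_append s₂ s₃ u').mp h1.2).1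
  refine ⟨u', G.endOf u' s₂, s₂, hchain, rfl, hlab ▸ hbL, fun hnd => ?_⟩
  have hinfix : G.nodes u' s₂ <:+: G.nodes u₀ s := by
    rw [hsplit]
    exact G.nodes_middle_infix s₁ s₂ s₃ u₀
  have hnd₂ : (G.nodes u' s₂).Nodup := hinfix.sublist.nodup hnd
  have hs₂ne : s₂ ≠ [] := by
    intro h
    rw [h] at hlab
    apply h₂
    rw [← hlab] at hbL
    simpa [GraphDB.label] using hbL
  obtain ⟨hneq, hint⟩ := G.simple_endpoints hnd₂ hs₂ne
  exact ⟨hnd₂, hneq, hint⟩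

lemma contained_st_of_factorCond (hC : FactorCond L₁ L₂) (h₂ : ([] : List A) ∉ L₂) :
    ContainedSt (singleAtom L₁) (singleAtom L₂) := by
  intro G v hv
  obtain ⟨u, e, s, hc, -, hl⟩ := mem_evalSt_singleAtom.mp hv
  obtain ⟨u', e', s₂, hc₂, he₂, hl₂, -⟩ := transfer_core hC h₂ hc hl
  exact mem_evalSt_singleAtom.mpr ⟨u', e', s₂, hc₂, he₂, hl₂⟩

lemma contained_ainj_of_factorCond (hC : FactorCond L₁ L₂) (h₂ : ([] : List A) ∉ L₂) :
    ContainedAInj (singleAtom L₁) (singleAtom L₂) := by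
  intro G v hv
  obtain ⟨u, e, s, hc, -, hl, hnd⟩ := mem_evalAInj_singleAtom.mp hv
  obtain ⟨u', e', s₂, hc₂, he₂, hl₂, hrest⟩ := transfer_core hC h₂ hc hl
  exact mem_evalAInj_singleAtom.mpr ⟨u', e', s₂, hc₂, he₂, hl₂, (hrest hnd).1⟩

lemma contained_qinj_of_factorCond (hC : FactorCond L₁ L₂) (h₂ : ([] : List A) ∉ L₂) :
    ContainedQInj (singleAtom L₁) (singleAtom L₂) := by
  intro G v hv
  obtain ⟨u, e, s, hc, -, hl, hnd, -, -⟩ := mem_evalQInj_singleAtom.mp hv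
  obtain ⟨u', e', s₂, hc₂, he₂, hl₂, hrest⟩ := transfer_core hC h₂ hc hl
  obtain ⟨hnd₂, hneq, hint⟩ := hrest hnd
  exact mem_evalQInj_singleAtom.mpr ⟨u', e', s₂, hc₂, he₂, hl₂, hnd₂, he₂ ▸ hneq, he₂ ▸ hint⟩

end Main

/-- For Boolean single-atom CRPQs (with languages not
containing the empty word), containments under standard, atom-injective and
query-injective semantics all coincide. -/
theorem singleAtom_containments_coincide {A : Type} (L₁ L₂ : Set (List A))
    (h₁ : ([] : List A) ∉ L₁) (h₂ : ([] : List A) ∉ L₂) :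
    (ContainedSt (singleAtom L₁) (singleAtom L₂) ↔
      ContainedAInj (singleAtom L₁) (singleAtom L₂)) ∧
    (ContainedSt (singleAtom L₁) (singleAtom L₂) ↔
      ContainedQInj (singleAtom L₁) (singleAtom L₂)) := by
  refine ⟨⟨fun h => contained_ainj_of_factorCond (factorCond_of_contained_st h₁ h) h₂,
           fun h => contained_st_of_factorCond (factorCond_of_contained_ainj h₁ h) h₂⟩,
          ⟨fun h => contained_qinj_of_factorCond (factorCond_of_contained_st h₁ h) h₂,
           fun h => contained_st_of_factorCond (factorCond_of_contained_qinj h₁ h) h₂⟩⟩
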